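/- arXiv:1609.01089 — 12 statements merged into one kernel-verified Lean document; each statement's English description precedes it below -/
import Mathlib

section
/- Let X ∈ R^{n×n}, f ∈ R, and a(x) ∈ R[x] a nonzero polynomial such that a(f·I - X) = 0. Then X · p(f·I, f·I - X; a) = p(f·I, f·I - X; a) · X = a(f) · I. -/
/-!
With `Y = f·I - X`, so that `X = f·I - Y` and `f·I` commutes with `Y`, the factorization
`(x - y) · ∑_{i<k} x^i y^{k-1-i} = x^k - y^k` summed against the coefficients of `a` gives
`X · p(f·I, Y; a) = a(f)·I - a(Y)`, and likewise on the other side; the hypothesis kills `a(Y)`.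
-/

open Finset

section DiffQuotient

variable {R A : Type*} [CommRing R] [Ring A] [Algebra R A]

/-- The paper's `p(f·1, Y; a)`, with `a` truncated at degree `d`. -/
def diffQuotient (d : ℕ) (a : ℕ → R) (f : R) (Y : A) : A :=
  ∑ k ∈ range (d + 1), a k • ∑ i ∈ range k, f ^ i • Y ^ (k - 1 - i)

lemma geom_sum₂_smul_eq (f : R) (Y : A) (k : ℕ) :
    ∑ i ∈ range k, f ^ i • Y ^ (k - 1 - i) =
      ∑ i ∈ range k, (f • (1 : A)) ^ i * Y ^ (k - 1 - i) :=
  sum_congr rfl fun i _ => by rw [smul_pow, one_pow, smul_one_mul]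

lemma sub_mul_geom_sum₂_smul (f : R) (Y : A) (k : ℕ) :
    (f • (1 : A) - Y) * ∑ i ∈ range k, f ^ i • Y ^ (k - 1 - i) = f ^ k • (1 : A) - Y ^ k := by
  rw [geom_sum₂_smul_eq, ((Commute.one_left Y).smul_left f).mul_geom_sum₂, smul_pow, one_pow]

lemma geom_sum₂_smul_mul_sub (f : R) (Y : A) (k : ℕ) :
    (∑ i ∈ range k, f ^ i • Y ^ (k - 1 - i)) * (f • (1 : A) - Y) = f ^ k • (1 : A) - Y ^ k := by
  rw [geom_sum₂_smul_eq, ((Commute.one_left Y).smul_left f).geom_sum₂_mul, smul_pow, one_pow]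

lemma sub_mul_diffQuotient (d : ℕ) (a : ℕ → R) (f : R) (Y : A) :
    (f • (1 : A) - Y) * diffQuotient d a f Y =
      (∑ k ∈ range (d + 1), a k * f ^ k) • (1 : A) - ∑ k ∈ range (d + 1), a k • Y ^ k := by
  simp_rw [diffQuotient, mul_sum, mul_smul_comm, sub_mul_geom_sum₂_smul, smul_sub, smul_smul]
  rw [sum_sub_distrib, sum_smul]

lemma diffQuotient_mul_sub (d : ℕ) (a : ℕ → R) (f : R) (Y : A) :
    diffQuotient d a f Y * (f • (1 : A) - Y) =
      (∑ k ∈ range (d + 1), a k * f ^ k) • (1 : A) - ∑ k ∈ range (d + 1), a k • Y ^ k := by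
  simp_rw [diffQuotient, sum_mul, smul_mul_assoc, geom_sum₂_smul_mul_sub, smul_sub, smul_smul]
  rw [sum_sub_distrib, sum_smul]

end DiffQuotient

theorem stmt2_general {R : Type*} [CommRing R] {n : ℕ} (d : ℕ) (a : ℕ → R)
    (X : Matrix (Fin n) (Fin n) R) (f : R)
    (hann : ∑ k ∈ Finset.range (d + 1),
        a k • (f • (1 : Matrix (Fin n) (Fin n) R) - X) ^ k = 0) :
    X * (∑ k ∈ Finset.range (d + 1),
          a k • ∑ i ∈ Finset.range k,
            f ^ i • (f • (1 : Matrix (Fin n) (Fin n) R) - X) ^ (k - 1 - i)) =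
      (∑ k ∈ Finset.range (d + 1), a k * f ^ k) • (1 : Matrix (Fin n) (Fin n) R) ∧
    (∑ k ∈ Finset.range (d + 1),
          a k • ∑ i ∈ Finset.range k,
            f ^ i • (f • (1 : Matrix (Fin n) (Fin n) R) - X) ^ (k - 1 - i)) * X =
      (∑ k ∈ Finset.range (d + 1), a k * f ^ k) • (1 : Matrix (Fin n) (Fin n) R) := by
  have hX : f • (1 : Matrix (Fin n) (Fin n) R) - (f • 1 - X) = X := sub_sub_cancel _ _
  have left := sub_mul_diffQuotient d a f (f • (1 : Matrix (Fin n) (Fin n) R) - X)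
  have right := diffQuotient_mul_sub d a f (f • (1 : Matrix (Fin n) (Fin n) R) - X)
  rw [hX, hann, sub_zero] at left right
  exact ⟨left, right⟩

/-- If `a(f·I - X) = 0` then `X · p(f·I, f·I - X; a) = p(f·I, f·I - X; a) · X = a(f) · I`. -/
theorem stmt2 {R : Type*} [CommRing R] {n : ℕ} (d : ℕ) (a : ℕ → R)
    (X : Matrix (Fin n) (Fin n) R) (f : R)
    (hane : ∃ k, k ≤ d ∧ a k ≠ 0)
    (hann : ∑ k ∈ Finset.range (d + 1),
        a k • (f • (1 : Matrix (Fin n) (Fin n) R) - X) ^ k = 0) :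
    X * (∑ k ∈ Finset.range (d + 1),
          a k • ∑ i ∈ Finset.range k,
            f ^ i • (f • (1 : Matrix (Fin n) (Fin n) R) - X) ^ (k - 1 - i)) =
      (∑ k ∈ Finset.range (d + 1), a k * f ^ k) • (1 : Matrix (Fin n) (Fin n) R) ∧
    (∑ k ∈ Finset.range (d + 1),
          a k • ∑ i ∈ Finset.range k,
            f ^ i • (f • (1 : Matrix (Fin n) (Fin n) R) - X) ^ (k - 1 - i)) * X =
      (∑ k ∈ Finset.range (d + 1), a k * f ^ k) • (1 : Matrix (Fin n) (Fin n) R) :=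
  stmt2_general d a X f hann
end

section
/- Let M = [[A, B], [C, D]] be an (n+s)×(n+s) block matrix over a commutative ring R, P ∈ R^{n×n} with P·A = A·P = a·I_n for some a ∈ R, and S = a·D - C·P·B. Then a^s · det(M) = det(A) · det(S). -/
/-!
Left multiplication by the block lower-triangular matrix `[[1, 0], [-C P, a 1]]`, of determinant
`a ^ s`, clears the lower-left block of `M` because `P A = a 1`, and leaves the block
upper-triangular matrix `[[A, B], [0, a D - C P B]]`.
-/

open Matrix

section

variable {R m n : Type*} [CommRing R] [Fintype m] [Fintype n] [DecidableEq m] [DecidableEq n]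

theorem Matrix.fromBlocks_elim_mul_fromBlocks (A P : Matrix m m R) (B : Matrix m n R)
    (C : Matrix n m R) (D : Matrix n n R) (a : R) (hPA : P * A = a • 1) :
    fromBlocks 1 0 (-(C * P)) (a • 1) * fromBlocks A B C D =
      fromBlocks A B 0 (a • D - C * P * B) := by
  rw [fromBlocks_multiply]
  simp [Matrix.mul_assoc, hPA, neg_add_eq_sub]

theorem Matrix.pow_card_mul_det_fromBlocks (A P : Matrix m m R) (B : Matrix m n R)
    (C : Matrix n m R) (D : Matrix n n R) (a : R) (hPA : P * A = a • 1) :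
    a ^ Fintype.card n * (fromBlocks A B C D).det = A.det * (a • D - C * P * B).det := by
  have hdet := congrArg det (fromBlocks_elim_mul_fromBlocks A P B C D a hPA)
  rwa [det_mul, det_fromBlocks_zero₁₂, det_fromBlocks_zero₂₁, det_one, one_mul, det_smul,
    det_one, mul_one] at hdet

end

theorem stmt4_general {R : Type*} [CommRing R] {n s : ℕ}
    (A P : Matrix (Fin n) (Fin n) R) (B : Matrix (Fin n) (Fin s) R)
    (C : Matrix (Fin s) (Fin n) R) (D : Matrix (Fin s) (Fin s) R) (a : R)
    (hPA : P * A = a • (1 : Matrix (Fin n) (Fin n) R)) :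
    a ^ s * (Matrix.fromBlocks A B C D).det =
      A.det * (a • D - C * P * B).det := by
  simpa using Matrix.pow_card_mul_det_fromBlocks A P B C D a hPA

/-- Schur-like complement determinant identity:
`a^s · det M = det A · det S` where `S = a·D - C·P·B` and `P·A = A·P = a·I`. -/
theorem stmt4 {R : Type*} [CommRing R] {n s : ℕ}
    (A P : Matrix (Fin n) (Fin n) R) (B : Matrix (Fin n) (Fin s) R)
    (C : Matrix (Fin s) (Fin n) R) (D : Matrix (Fin s) (Fin s) R) (a : R)
    (hPA : P * A = a • (1 : Matrix (Fin n) (Fin n) R))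
    (hAP : A * P = a • (1 : Matrix (Fin n) (Fin n) R)) :
    a ^ s * (Matrix.fromBlocks A B C D).det =
      A.det * (a • D - C * P * B).det :=
  stmt4_general A P B C D a hPA
end

section
/- Let M = [[A, B], [C, D]] be an (n+s)×(n+s) block matrix over a commutative ring R and R' = [[R_A, R_B], [R_C, R_D]] a matrix partitioned conformally with R'·M = m·I_{n+s} for some m ∈ R. Then det(R_D) · det(M) = det(A) · m^s. -/
/-!
Multiplying `M` on the left by `[[1, 0], [R_C, R_D]]`, whose determinant is `det R_D`, replaces
its bottom block row by the bottom block row of `R' M = m I`, namely `[0, m I]`. The result is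
block upper triangular with determinant `det A · m ^ s`.
-/

namespace Matrix

variable {l o R : Type*} [DecidableEq l] [DecidableEq o]

theorem smul_one_eq_fromBlocks [Semiring R] (c : R) :
    (c • 1 : Matrix (l ⊕ o) (l ⊕ o) R) = fromBlocks (c • 1) 0 0 (c • 1) := by
  rw [← fromBlocks_one, fromBlocks_smul, smul_zero, smul_zero]

theorem det_mul_det_fromBlocks_of_mul_add_mul_eq_zero [Fintype l] [Fintype o] [CommRing R]
    {A : Matrix l l R} {B : Matrix l o R} {C : Matrix o l R} {D : Matrix o o R}
    {RC : Matrix o l R} {RD : Matrix o o R} (h : RC * A + RD * C = 0) :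
    RD.det * (fromBlocks A B C D).det = A.det * (RC * B + RD * D).det := by
  have hrow : fromBlocks 1 0 RC RD * fromBlocks A B C D = fromBlocks A B 0 (RC * B + RD * D) := by
    rw [fromBlocks_multiply, h, Matrix.one_mul, Matrix.one_mul, Matrix.zero_mul, Matrix.zero_mul,
      add_zero, add_zero]
  simpa only [det_mul, det_fromBlocks_zero₁₂, det_fromBlocks_zero₂₁, det_one, one_mul]
    using congrArg det hrow

end Matrix

/-- Opponent determinant identity: if `R'·M = m·I` with lower-right block `R_D`, then
`det R_D · det M = det A · m^s`. -/
theorem stmt5 {R : Type*} [CommRing R] {n s : ℕ}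
    (A RA : Matrix (Fin n) (Fin n) R) (B RB : Matrix (Fin n) (Fin s) R)
    (C RC : Matrix (Fin s) (Fin n) R) (D RD : Matrix (Fin s) (Fin s) R) (m : R)
    (hRM : Matrix.fromBlocks RA RB RC RD * Matrix.fromBlocks A B C D =
      m • (1 : Matrix (Fin n ⊕ Fin s) (Fin n ⊕ Fin s) R)) :
    RD.det * (Matrix.fromBlocks A B C D).det = A.det * m ^ s := by
  rw [Matrix.fromBlocks_multiply, Matrix.smul_one_eq_fromBlocks, Matrix.fromBlocks_inj] at hRM
  obtain ⟨-, -, hlower, hcorner⟩ := hRM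
  rw [Matrix.det_mul_det_fromBlocks_of_mul_add_mul_eq_zero hlower, hcorner, Matrix.det_smul,
    Matrix.det_one, mul_one, Fintype.card_fin]
end

section
/- Let M = [[A, B], [C, D]] over a commutative ring R with P·A = A·P = a·I_n, R'·M = m·I_{n+s} where R' has lower-right s×s block R_D, and S = a·D - C·P·B. Then R_D · S = a·m·I_s. -/
/-!
Only the bottom block row of `R' * M = m • 1` is needed. It gives `RD * C = -(RC * A)`, and then
`A * P = a • 1` turns `RD * (C * P * B)` into `-a • (RC * B)`, so
`RD * (a • D - C * P * B) = a • (RC * B + RD * D) = (a * m) • 1`.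
-/

namespace Matrix

variable {n s α : Type*} [Fintype n] [Fintype s] [DecidableEq n] [DecidableEq s] [CommRing α]

theorem bottom_row_of_fromBlocks_mul_eq_smul_one {RA A : Matrix n n α} {RB B : Matrix n s α}
    {RC C : Matrix s n α} {RD D : Matrix s s α} {m : α}
    (h : fromBlocks RA RB RC RD * fromBlocks A B C D = m • (1 : Matrix (n ⊕ s) (n ⊕ s) α)) :
    RC * A + RD * C = 0 ∧ RC * B + RD * D = m • 1 := by
  rw [fromBlocks_multiply, ← fromBlocks_one, fromBlocks_smul, fromBlocks_inj] at h
  exact ⟨h.2.2.1.trans (smul_zero m), h.2.2.2⟩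

theorem mul_smul_sub_mul_mul_eq_smul_one {A P : Matrix n n α} {B : Matrix n s α}
    {RC C : Matrix s n α} {RD D : Matrix s s α} {a m : α}
    (hAP : A * P = a • 1) (hC : RC * A + RD * C = 0) (hD : RC * B + RD * D = m • 1) :
    RD * (a • D - C * P * B) = (a * m) • 1 := by
  have hRDC : RD * C = -(RC * A) := eq_neg_of_add_eq_zero_right hC
  calc RD * (a • D - C * P * B)
      = a • (RD * D) - RD * C * P * B := by
        rw [Matrix.mul_sub, Matrix.mul_smul, Matrix.mul_assoc RD, Matrix.mul_assoc RD]
    _ = a • (RD * D) + RC * (A * P) * B := by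
        rw [hRDC, Matrix.neg_mul, Matrix.neg_mul, sub_neg_eq_add, Matrix.mul_assoc RC A P]
    _ = a • (RC * B + RD * D) := by
        rw [hAP, Matrix.mul_smul, Matrix.mul_one, Matrix.smul_mul, smul_add, add_comm]
    _ = (a * m) • 1 := by rw [hD, smul_smul]

end Matrix

theorem stmt6_general {R : Type*} [CommRing R] {n s : ℕ}
    (A P RA : Matrix (Fin n) (Fin n) R) (B RB : Matrix (Fin n) (Fin s) R)
    (C RC : Matrix (Fin s) (Fin n) R) (D RD : Matrix (Fin s) (Fin s) R) (a m : R)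
    (hAP : A * P = a • (1 : Matrix (Fin n) (Fin n) R))
    (hRM : Matrix.fromBlocks RA RB RC RD * Matrix.fromBlocks A B C D =
      m • (1 : Matrix (Fin n ⊕ Fin s) (Fin n ⊕ Fin s) R)) :
    RD * (a • D - C * P * B) = (a * m) • (1 : Matrix (Fin s) (Fin s) R) := by
  obtain ⟨hC, hD⟩ := Matrix.bottom_row_of_fromBlocks_mul_eq_smul_one hRM
  exact Matrix.mul_smul_sub_mul_mul_eq_smul_one hAP hC hD

/-- Relation between the opponent and the Schur-like complement: `R_D · S = a·m·I_s`. -/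
theorem stmt6 {R : Type*} [CommRing R] {n s : ℕ}
    (A P RA : Matrix (Fin n) (Fin n) R) (B RB : Matrix (Fin n) (Fin s) R)
    (C RC : Matrix (Fin s) (Fin n) R) (D RD : Matrix (Fin s) (Fin s) R) (a m : R)
    (hPA : P * A = a • (1 : Matrix (Fin n) (Fin n) R))
    (hAP : A * P = a • (1 : Matrix (Fin n) (Fin n) R))
    (hRM : Matrix.fromBlocks RA RB RC RD * Matrix.fromBlocks A B C D =
      m • (1 : Matrix (Fin n ⊕ Fin s) (Fin n ⊕ Fin s) R)) :
    RD * (a • D - C * P * B) = (a * m) • (1 : Matrix (Fin s) (Fin s) R) :=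
  stmt6_general A P RA B RB C RC D RD a m hAP hRM
end

section
/- Let M = [[A, B], [C, D]] over a commutative ring, P with P·A = A·P = a·I_n, S = a·D - C·P·B, L = [[I_n, 0], [-C·P, a·I_s]] and U = [[I_n, -P·B], [0, a·I_s]]. Then L·M = [[A, B], [0, S]], M·U = [[A, 0], [C, S]], and L·M·U = [[A, 0], [0, a·S]]. -/
namespace Matrix

variable {R m o : Type*} [CommRing R] [Fintype m] [DecidableEq m] [Fintype o] [DecidableEq o]
  {A P : Matrix m m R} {B : Matrix m o R} {C : Matrix o m R} {D : Matrix o o R} {a : R}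

theorem fromBlocks_lowerElim_mul (hPA : P * A = a • 1) :
    fromBlocks 1 0 (-(C * P)) (a • 1) * fromBlocks A B C D
      = fromBlocks A B 0 (a • D - C * P * B) := by
  rw [fromBlocks_multiply]
  congr 1 <;> simp [Matrix.mul_assoc, hPA, sub_eq_neg_add]

theorem fromBlocks_mul_upperElim (hAP : A * P = a • 1) :
    fromBlocks A B C D * fromBlocks 1 (-(P * B)) 0 (a • 1)
      = fromBlocks A 0 C (a • D - C * P * B) := by
  rw [fromBlocks_multiply]
  congr 1 <;> simp [← Matrix.mul_assoc, hAP, sub_eq_neg_add]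

theorem fromBlocks_upperTriangular_mul_upperElim (hAP : A * P = a • 1) (S : Matrix o o R) :
    fromBlocks A B 0 S * fromBlocks 1 (-(P * B)) 0 (a • 1) = fromBlocks A 0 0 (a • S) := by
  rw [fromBlocks_multiply]
  congr 1 <;> simp [← Matrix.mul_assoc, hAP]

end Matrix

/-- Schur-like multiplier identities:
`L·M = [[A,B],[0,S]]`, `M·U = [[A,0],[C,S]]`, `L·M·U = [[A,0],[0,a·S]]`. -/
theorem stmt7 {R : Type*} [CommRing R] {n s : ℕ}
    (A P : Matrix (Fin n) (Fin n) R) (B : Matrix (Fin n) (Fin s) R)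
    (C : Matrix (Fin s) (Fin n) R) (D : Matrix (Fin s) (Fin s) R) (a : R)
    (hPA : P * A = a • (1 : Matrix (Fin n) (Fin n) R))
    (hAP : A * P = a • (1 : Matrix (Fin n) (Fin n) R)) :
    let M := Matrix.fromBlocks A B C D
    let S := a • D - C * P * B
    let L := Matrix.fromBlocks 1 0 (-(C * P)) (a • (1 : Matrix (Fin s) (Fin s) R))
    let U := Matrix.fromBlocks 1 (-(P * B)) 0 (a • (1 : Matrix (Fin s) (Fin s) R))
    L * M = Matrix.fromBlocks A B 0 S ∧
    M * U = Matrix.fromBlocks A 0 C S ∧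
    L * M * U = Matrix.fromBlocks A 0 0 (a • S) := by
  intro M S L U
  have hLM : L * M = Matrix.fromBlocks A B 0 S := Matrix.fromBlocks_lowerElim_mul hPA
  refine ⟨hLM, Matrix.fromBlocks_mul_upperElim hAP, ?_⟩
  rw [hLM]
  exact Matrix.fromBlocks_upperTriangular_mul_upperElim hAP S
end

section
/- Let M = [[A, B], [C, D]] over a commutative ring R with multiplicative absolute value, P ∈ R^{n×n} not all zero, a ∈ R with P·A = a·I_n, and S = a·D - C·P·B. If M is strictly diagonally dominant, then S is strictly diagonally dominant. -/
/-!
Let `d_l(A) = |A_ll| - ∑_{k ≠ l} |A_lk|` be the dominance margin of row `l`. For every row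
vector `y`, splitting off the diagonal term of each column gives `∑_l |y_l| d_l(A) ≤ ∑_k |(yA)_k|`.
Dominance of the upper rows of `M` says `∑_j |B_lj| < d_l(A)`, hence `∑_j |(yB)_j| ≤ ∑_k |(yA)_k|`.
With `y` a row of `P` this shows `a ≠ 0` (otherwise `PA = 0` forces `P = 0`); with `y` the `i`-th
row of `CP`, for which `yA = a C_i`, it bounds row `i` of `CPB` by `|a| ∑_k |C_ik|`, which is less
than `|a| d_i(D)` by dominance of the lower rows of `M`. That is exactly the room needed for row `i`
of `aD - CPB` to be dominant.
-/

/-- `X` is strictly diagonally dominant w.r.t. the absolute value `v`. -/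
def IsSD {R : Type*} [CommRing R] {ι : Type*} [Fintype ι] [DecidableEq ι]
    (v : R → ℝ) (X : Matrix ι ι R) : Prop :=
  ∀ i, (∑ k ∈ Finset.univ.erase i, v (X i k)) < v (X i i)

open Finset Matrix IsAbsoluteValue

section Margin

variable {R : Type*} (v : R → ℝ) {ι κ : Type*} [Fintype ι] [DecidableEq ι]

def diagMargin (X : Matrix ι ι R) (i : ι) : ℝ :=
  v (X i i) - ∑ k ∈ univ.erase i, v (X i k)

theorem isSD_iff_diagMargin_pos [CommRing R] {X : Matrix ι ι R} :
    IsSD v X ↔ ∀ i, 0 < diagMargin v X i := by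
  simp only [IsSD, diagMargin, sub_pos]

variable [Fintype κ] [DecidableEq κ]

theorem diagMargin_fromBlocks_inl (A : Matrix ι ι R) (B : Matrix ι κ R) (C : Matrix κ ι R)
    (D : Matrix κ κ R) (l : ι) :
    diagMargin v (fromBlocks A B C D) (.inl l) = diagMargin v A l - ∑ j, v (B l j) := by
  simp only [diagMargin, sum_erase_eq_sub (mem_univ _), Fintype.sum_sum_type,
    fromBlocks_apply₁₁, fromBlocks_apply₁₂]
  ring

theorem diagMargin_fromBlocks_inr (A : Matrix ι ι R) (B : Matrix ι κ R) (C : Matrix κ ι R)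
    (D : Matrix κ κ R) (i : κ) :
    diagMargin v (fromBlocks A B C D) (.inr i) = diagMargin v D i - ∑ k, v (C i k) := by
  simp only [diagMargin, sum_erase_eq_sub (mem_univ _), Fintype.sum_sum_type,
    fromBlocks_apply₂₁, fromBlocks_apply₂₂]
  ring

end Margin

theorem Finset.sum_sum_erase_comm {ι M : Type*} [Fintype ι] [DecidableEq ι] [AddCommMonoid M]
    (f : ι → ι → M) :
    ∑ l, ∑ k ∈ univ.erase l, f l k = ∑ k, ∑ l ∈ univ.erase k, f l k :=
  sum_comm' fun l k => by simp [ne_comm]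

section AbsoluteValue

variable {R : Type*} [CommRing R] (abv : R → ℝ) [IsAbsoluteValue abv]
  {ι κ : Type*} [Fintype ι] [DecidableEq ι]

theorem abv_mul_diag_sub_le_abv_vecMul (A : Matrix ι ι R) (y : ι → R) (k : ι) :
    abv (y k) * abv (A k k) - ∑ l ∈ univ.erase k, abv (y l) * abv (A l k)
      ≤ abv ((y ᵥ* A) k) := by
  have hsplit : (y ᵥ* A) k = y k * A k k + ∑ l ∈ univ.erase k, y l * A l k :=
    (add_sum_erase _ _ (mem_univ k)).symm
  calc abv (y k) * abv (A k k) - ∑ l ∈ univ.erase k, abv (y l) * abv (A l k)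
      ≤ abv (y k * A k k) - abv (∑ l ∈ univ.erase k, y l * A l k) := by
        simp only [← abv_mul abv]
        gcongr
        exact abv_sum abv _ _
    _ ≤ abv ((y ᵥ* A) k) := hsplit ▸ (toAbsoluteValue abv).le_add _ _

theorem sum_abv_mul_diagMargin_le (A : Matrix ι ι R) (y : ι → R) :
    ∑ l, abv (y l) * diagMargin abv A l ≤ ∑ k, abv ((y ᵥ* A) k) := by
  calc ∑ l, abv (y l) * diagMargin abv A l
      = ∑ k, (abv (y k) * abv (A k k) - ∑ l ∈ univ.erase k, abv (y l) * abv (A l k)) := by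
        simp only [diagMargin, mul_sub, mul_sum, sum_sub_distrib]
        rw [sum_sum_erase_comm (fun l k => abv (y l) * abv (A l k))]
    _ ≤ ∑ k, abv ((y ᵥ* A) k) := sum_le_sum fun k _ => abv_mul_diag_sub_le_abv_vecMul abv A y k

theorem IsSD.vecMul_eq_zero {A : Matrix ι ι R} (hA : IsSD abv A) {y : ι → R}
    (hy : y ᵥ* A = 0) : y = 0 := by
  have hpos := (isSD_iff_diagMargin_pos abv).1 hA
  have hnonneg (l : ι) : 0 ≤ abv (y l) * diagMargin abv A l :=
    mul_nonneg (abv_nonneg abv (y l)) (hpos l).le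
  have hle := sum_abv_mul_diagMargin_le abv A y
  simp only [hy, Pi.zero_apply, abv_zero abv, sum_const_zero] at hle
  have hzero := (sum_eq_zero_iff_of_nonneg fun l _ => hnonneg l).1
    (hle.antisymm (sum_nonneg fun l _ => hnonneg l))
  ext l
  simpa [abv_eq_zero abv, (hpos l).ne'] using hzero l (mem_univ l)

theorem IsSD.eq_zero_of_mul_eq_zero {A : Matrix ι ι R} (hA : IsSD abv A)
    {P : Matrix κ ι R} (hPA : P * A = 0) : P = 0 :=
  funext fun i => hA.vecMul_eq_zero abv (congrFun hPA i)

theorem sum_abv_vecMul_le_of_le_diagMargin {A : Matrix ι ι R} {B : Matrix ι κ R} [Fintype κ]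
    (hB : ∀ l, ∑ j, abv (B l j) ≤ diagMargin abv A l) (y : ι → R) :
    ∑ j, abv ((y ᵥ* B) j) ≤ ∑ k, abv ((y ᵥ* A) k) :=
  calc ∑ j, abv ((y ᵥ* B) j)
      ≤ ∑ j, ∑ l, abv (y l) * abv (B l j) := sum_le_sum fun j _ => by
        simpa only [vecMul_apply_eq_sum, abv_mul abv] using
          abv_sum abv (fun l => y l * B l j) univ
    _ = ∑ l, abv (y l) * ∑ j, abv (B l j) := by rw [sum_comm]; simp only [mul_sum]
    _ ≤ ∑ l, abv (y l) * diagMargin abv A l :=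
        sum_le_sum fun l _ => mul_le_mul_of_nonneg_left (hB l) (abv_nonneg abv _)
    _ ≤ ∑ k, abv ((y ᵥ* A) k) := sum_abv_mul_diagMargin_le abv A y

theorem le_diagMargin_smul_sub (a : R) (D E : Matrix ι ι R) (i : ι) :
    abv a * diagMargin abv D i - ∑ j, abv (E i j) ≤ diagMargin abv (a • D - E) i := by
  have hdiag : abv a * abv (D i i) - abv (E i i) ≤ abv ((a • D - E) i i) := by
    simpa only [Matrix.sub_apply, Matrix.smul_apply, smul_eq_mul, ← abv_mul abv] using
      sub_abv_le_abv_sub abv (a * D i i) (E i i)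
  have hoff : ∑ j ∈ univ.erase i, abv ((a • D - E) i j)
      ≤ abv a * ∑ j ∈ univ.erase i, abv (D i j) + ∑ j ∈ univ.erase i, abv (E i j) := by
    rw [mul_sum, ← sum_add_distrib]
    refine sum_le_sum fun j _ => ?_
    simpa only [Matrix.sub_apply, Matrix.smul_apply, smul_eq_mul, sub_eq_add_neg, abv_neg abv,
      ← abv_mul abv] using abv_add abv (a * D i j) (-E i j)
  have hE := add_sum_erase univ (fun j => abv (E i j)) (mem_univ i)
  simp only [diagMargin]
  linarith

end AbsoluteValue

/-- If `M = [[A,B],[C,D]]` is strictly diagonally dominant, `P ≠ 0` and `P·A = a·I`, then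
the Schur-like complement `S = a·D - C·P·B` is strictly diagonally dominant. -/
theorem stmt8 {R : Type*} [CommRing R] {n s : ℕ} (v : R → ℝ)
    (hv0 : ∀ r : R, v r = 0 ↔ r = 0)
    (hvnn : ∀ r : R, 0 ≤ v r)
    (hvadd : ∀ r r' : R, v (r + r') ≤ v r + v r')
    (hvmul : ∀ r r' : R, v (r * r') = v r * v r')
    (A P : Matrix (Fin n) (Fin n) R) (B : Matrix (Fin n) (Fin s) R)
    (C : Matrix (Fin s) (Fin n) R) (D : Matrix (Fin s) (Fin s) R) (a : R)
    (hP : P ≠ 0)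
    (hPA : P * A = a • (1 : Matrix (Fin n) (Fin n) R))
    (hM : IsSD v (Matrix.fromBlocks A B C D)) :
    IsSD v (a • D - C * P * B) := by
  have : IsAbsoluteValue v := ⟨hvnn, hv0 _, hvadd, hvmul⟩
  have hMargin := (isSD_iff_diagMargin_pos v).1 hM
  have hB (l : Fin n) : ∑ j, v (B l j) < diagMargin v A l := by
    simpa only [diagMargin_fromBlocks_inl, sub_pos] using hMargin (.inl l)
  have hC (i : Fin s) : ∑ k, v (C i k) < diagMargin v D i := by
    simpa only [diagMargin_fromBlocks_inr, sub_pos] using hMargin (.inr i)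
  have hA : IsSD v A := (isSD_iff_diagMargin_pos v).2 fun l =>
    (sum_nonneg fun j _ => abv_nonneg v (B l j)).trans_lt (hB l)
  have ha : a ≠ 0 := by
    rintro rfl
    exact hP (hA.eq_zero_of_mul_eq_zero v (by simpa using hPA))
  have hCPB (i : Fin s) : ∑ j, v ((C * P * B) i j) ≤ v a * ∑ k, v (C i k) := by
    have hrow : (C * P) i ᵥ* A = a • C i := by
      rw [← mul_apply_eq_vecMul, Matrix.mul_assoc, hPA, Matrix.mul_smul, Matrix.mul_one]
      rfl
    calc ∑ j, v ((C * P * B) i j) ≤ ∑ k, v (((C * P) i ᵥ* A) k) :=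
          sum_abv_vecMul_le_of_le_diagMargin v (fun l => (hB l).le) _
      _ = v a * ∑ k, v (C i k) := by
          simp only [hrow, Pi.smul_apply, smul_eq_mul, abv_mul v, mul_sum]
  refine (isSD_iff_diagMargin_pos v).2 fun i => ?_
  calc 0 < v a * (diagMargin v D i - ∑ k, v (C i k)) :=
        mul_pos ((abv_pos v).2 ha) (sub_pos.2 (hC i))
    _ ≤ v a * diagMargin v D i - ∑ j, v ((C * P * B) i j) := by linarith [hCPB i]
    _ ≤ diagMargin v (a • D - C * P * B) i := le_diagMargin_smul_sub v a D _ i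
end

section
/- Over a commutative ring with multiplicative absolute value, if a square matrix M is strictly doubly diagonally dominant, then M is regular (det M is nonzero and not a zero divisor). -/
/-- `X` is strictly doubly diagonally dominant w.r.t. the absolute value `v`. -/
def IsSDD {R : Type*} [CommRing R] {ι : Type*} [Fintype ι] [DecidableEq ι]
    (v : R → ℝ) (X : Matrix ι ι R) : Prop :=
  ∀ i j, (∑ k ∈ Finset.univ.erase i, v (X i k)) * (∑ l ∈ Finset.univ.erase j, v (X j l)) <
    v (X i i * X j j)

/-!
If `M *ᵥ x = 0` with `x ≠ 0`, let `x i` be a coordinate of largest absolute value and `x j`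
one of largest absolute value among the others. Rows `i` and `j` of the kernel equation give
`|M i i| |x i| ≤ Rᵢ |x j|` and `|M j j| |x j| ≤ Rⱼ |x i|`, where `Rₖ` is the off-diagonal row sum;
multiplying them contradicts double diagonal dominance. So `M` has trivial kernel, and the
absolute value forces `R` to be a domain, in which this means `det M` is a nonzero non-zero-divisor.
-/

open Finset Matrix

lemma AbsoluteValue.noZeroDivisors {R S : Type*} [Semiring R] [Semiring S] [PartialOrder S]
    [NoZeroDivisors S] (abv : AbsoluteValue R S) : NoZeroDivisors R where
  eq_zero_or_eq_zero_of_mul_eq_zero {a b} hab := by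
    simpa only [map_mul, map_zero, mul_eq_zero, abv.eq_zero] using congrArg abv hab

lemma AbsoluteValue.diag_mul_le_of_mulVec_eq_zero {R ι : Type*} [Ring R] [Fintype ι]
    [DecidableEq ι] (abv : AbsoluteValue R ℝ) {M : Matrix ι ι R} {x : ι → R} (hx : M *ᵥ x = 0)
    (p : ι) {c : ℝ} (hc : ∀ k ∈ univ.erase p, abv (x k) ≤ c) :
    abv (M p p) * abv (x p) ≤ (∑ k ∈ univ.erase p, abv (M p k)) * c := by
  have hrow : M p p * x p = -∑ k ∈ univ.erase p, M p k * x k := by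
    have h : ∑ k, M p k * x k = 0 := congrFun hx p
    rw [← add_sum_erase _ _ (mem_univ p)] at h
    exact eq_neg_of_add_eq_zero_left h
  calc abv (M p p) * abv (x p) = abv (∑ k ∈ univ.erase p, M p k * x k) := by
        rw [← map_mul, hrow, abv.map_neg]
    _ ≤ ∑ k ∈ univ.erase p, abv (M p k) * abv (x k) :=
        (abv.sum_le _ _).trans_eq (by simp only [map_mul])
    _ ≤ ∑ k ∈ univ.erase p, abv (M p k) * c :=
        sum_le_sum fun k hk => mul_le_mul_of_nonneg_left (hc k hk) (abv.nonneg _)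
    _ = (∑ k ∈ univ.erase p, abv (M p k)) * c := (sum_mul _ _ _).symm

namespace IsSDD

variable {R ι : Type*} [CommRing R] [Fintype ι] [DecidableEq ι] {abv : AbsoluteValue R ℝ}
  {M : Matrix ι ι R}

lemma abv_diag_pos (hM : IsSDD abv M) (i : ι) : 0 < abv (M i i) := by
  have h := hM i i
  rw [map_mul] at h
  nlinarith [abv.nonneg (M i i), sum_nonneg fun k (_ : k ∈ univ.erase i) => abv.nonneg (M i k)]

lemma isDomain [Nonempty ι] (hM : IsSDD abv M) : IsDomain R :=
  have : NoZeroDivisors R := abv.noZeroDivisors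
  have : Nontrivial R :=
    let i := Classical.arbitrary ι
    nontrivial_of_ne _ _ (abv.pos_iff.mp (hM.abv_diag_pos i))
  NoZeroDivisors.to_isDomain R

lemma eq_zero_of_mulVec_eq_zero (hM : IsSDD abv M) {x : ι → R} (hx : M *ᵥ x = 0) : x = 0 := by
  by_contra hx0
  obtain ⟨k, hk⟩ := Function.ne_iff.mp hx0
  have : Nonempty ι := ⟨k⟩
  obtain ⟨i, hi⟩ := Finite.exists_max fun k => abv (x k)
  have hxi : 0 < abv (x i) := (abv.pos hk).trans_le (hi k)
  by_cases hothers : ∃ j ∈ univ.erase i, x j ≠ 0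
  · obtain ⟨j₀, hj₀, hxj₀⟩ := hothers
    obtain ⟨j, -, hjmax⟩ := exists_max_image (univ.erase i) (fun k => abv (x k)) ⟨j₀, hj₀⟩
    have hxj : 0 < abv (x j) := (abv.pos hxj₀).trans_le (hjmax j₀ hj₀)
    have c₁ := abv.diag_mul_le_of_mulVec_eq_zero hx i hjmax
    have c₂ := abv.diag_mul_le_of_mulVec_eq_zero hx j fun k _ => hi k
    have key := mul_le_mul c₁ c₂ (mul_nonneg (abv.nonneg _) (abv.nonneg _))
      (mul_nonneg (sum_nonneg fun k _ => abv.nonneg _) (abv.nonneg _))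
    have hij := hM i j
    rw [map_mul] at hij
    nlinarith [mul_pos hxi hxj]
  · push Not at hothers
    have hrow := abv.diag_mul_le_of_mulVec_eq_zero hx i (c := 0) fun k hk => by
      simp [hothers k hk]
    rw [mul_zero] at hrow
    exact (mul_pos (hM.abv_diag_pos i) hxi).not_ge hrow

lemma det_ne_zero [Nonempty ι] (hM : IsSDD abv M) : M.det ≠ 0 := by
  have := hM.isDomain
  rw [Ne, ← exists_mulVec_eq_zero_iff]
  rintro ⟨x, hx0, hx⟩
  exact hx0 (hM.eq_zero_of_mulVec_eq_zero hx)

end IsSDD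

/-- A strictly doubly diagonally dominant matrix over a commutative ring with a
multiplicative absolute value is regular: its determinant is nonzero and not a zero divisor. -/
theorem stmt9 {R : Type*} [CommRing R] {N : ℕ} (hN : 0 < N) (v : R → ℝ)
    (hv0 : ∀ r : R, v r = 0 ↔ r = 0)
    (hvnn : ∀ r : R, 0 ≤ v r)
    (hvadd : ∀ r r' : R, v (r + r') ≤ v r + v r')
    (hvmul : ∀ r r' : R, v (r * r') = v r * v r')
    (M : Matrix (Fin N) (Fin N) R)
    (hM : IsSDD v M) :
    M.det ≠ 0 ∧ ∀ r : R, M.det * r = 0 → r = 0 := by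
  let abv : AbsoluteValue R ℝ :=
    { toFun := v, map_mul' := hvmul, nonneg' := hvnn, eq_zero' := hv0, add_le' := hvadd }
  have hM' : IsSDD abv M := hM
  have : Nonempty (Fin N) := ⟨⟨0, hN⟩⟩
  have := hM'.isDomain
  exact ⟨hM'.det_ne_zero, fun r hr => (mul_eq_zero.mp hr).resolve_left hM'.det_ne_zero⟩
end

section
/- Let M = [[A, B], [C, D]] over a commutative ring R, f ∈ R, X ∈ R^{N×N} (N = n+s), M̃ = f·I_N - X·M, and m(x) ∈ R[x] a nonzero annihilating polynomial of M̃. Partition p(f·I, M̃; m)·X conformally to M and let K be its lower-right s×s block. Then m(f)^s · det(A) = det(M) · det(K). -/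
/-!
Write `Z = f • 1 - X M` and `q = p(f • 1, Z; m)`. The telescoping identity
`(∑ i < k, f ^ i Z ^ (k - 1 - i)) (f • 1 - Z) = f ^ k • 1 - Z ^ k`, summed against the
coefficients of `m`, turns `m(Z) = 0` into `q X M = m(f) • 1`. In block form the lower block
row of `q X` is `[L K]` with `L A + K C = 0` and `L B + K D = m(f) • 1`, so
`[[1, 0], [L, K]] M = [[A, B], [0, m(f) • 1]]`; taking determinants gives the claim.
-/

open Finset Matrix

section Divided

variable {R S : Type*} [CommRing R] [Ring S] [Algebra R S]

/-- The paper's `p(f • 1, Z; m)`, with `m = ∑_{k ≤ d} m k X ^ k`. -/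
def dividedDifference (d : ℕ) (m : ℕ → R) (f : R) (Z : S) : S :=
  ∑ k ∈ range (d + 1), m k • ∑ i ∈ range k, f ^ i • Z ^ (k - 1 - i)

theorem geom_sum_smul_mul_smul_one_sub (f : R) (Z : S) (k : ℕ) :
    (∑ i ∈ range k, f ^ i • Z ^ (k - 1 - i)) * (f • 1 - Z) = f ^ k • 1 - Z ^ k := by
  have := ((Commute.one_left Z).smul_left f).geom_sum₂_mul k
  simpa only [smul_pow, one_pow, smul_one_mul] using this

theorem dividedDifference_mul_smul_one_sub (d : ℕ) (m : ℕ → R) (f : R) (Z : S)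
    (hZ : ∑ k ∈ range (d + 1), m k • Z ^ k = 0) :
    dividedDifference d m f Z * (f • 1 - Z) = (∑ k ∈ range (d + 1), m k * f ^ k) • 1 := by
  have hterm : ∀ k, (m k • ∑ i ∈ range k, f ^ i • Z ^ (k - 1 - i)) * (f • 1 - Z) =
      (m k * f ^ k) • (1 : S) - m k • Z ^ k := fun k => by
    rw [smul_mul_assoc, geom_sum_smul_mul_smul_one_sub, smul_sub, smul_smul]
  rw [dividedDifference, sum_mul, sum_congr rfl fun k _ => hterm k, sum_sub_distrib, hZ,
    sub_zero, sum_smul]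

end Divided

theorem Matrix.pow_card_mul_det_eq_det_fromBlocks_mul_det_toBlocks₂₂
    {R l o : Type*} [CommRing R] [Fintype l] [Fintype o] [DecidableEq l] [DecidableEq o]
    {A : Matrix l l R} {B : Matrix l o R} {C : Matrix o l R} {D : Matrix o o R}
    {Q : Matrix (l ⊕ o) (l ⊕ o) R} {c : R} (hQ : Q * fromBlocks A B C D = c • 1) :
    c ^ Fintype.card o * A.det = (fromBlocks A B C D).det * Q.toBlocks₂₂.det := by
  have hblocks : fromBlocks (Q.toBlocks₁₁ * A + Q.toBlocks₁₂ * C)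
      (Q.toBlocks₁₁ * B + Q.toBlocks₁₂ * D) (Q.toBlocks₂₁ * A + Q.toBlocks₂₂ * C)
      (Q.toBlocks₂₁ * B + Q.toBlocks₂₂ * D) =
      fromBlocks (c • 1) 0 0 (c • 1) := by
    rw [← fromBlocks_multiply, fromBlocks_toBlocks, hQ, ← fromBlocks_one, fromBlocks_smul,
      smul_zero, smul_zero]
  obtain ⟨-, -, hL, hK⟩ := fromBlocks_inj.mp hblocks
  have htri : fromBlocks 1 0 Q.toBlocks₂₁ Q.toBlocks₂₂ * fromBlocks A B C D =
      fromBlocks A B 0 (c • 1) := by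
    simp [fromBlocks_multiply, hL, hK]
  have hdet := congrArg det htri
  rw [det_mul, det_fromBlocks_zero₁₂, det_fromBlocks_zero₂₁, det_one, one_mul, det_smul,
    det_one, mul_one] at hdet
  linear_combination -hdet

theorem stmt14_general {R : Type*} [CommRing R] {n s : ℕ} (d : ℕ) (m : ℕ → R) (f : R)
    (A : Matrix (Fin n) (Fin n) R) (B : Matrix (Fin n) (Fin s) R)
    (C : Matrix (Fin s) (Fin n) R) (D : Matrix (Fin s) (Fin s) R)
    (X : Matrix (Fin n ⊕ Fin s) (Fin n ⊕ Fin s) R)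
    (hann : ∑ k ∈ Finset.range (d + 1),
        m k • (f • (1 : Matrix (Fin n ⊕ Fin s) (Fin n ⊕ Fin s) R)
          - X * Matrix.fromBlocks A B C D) ^ k = 0) :
    (∑ k ∈ Finset.range (d + 1), m k * f ^ k) ^ s * A.det =
      (Matrix.fromBlocks A B C D).det *
        (Matrix.toBlocks₂₂
          ((∑ k ∈ Finset.range (d + 1),
            m k • ∑ i ∈ Finset.range k,
              f ^ i • (f • (1 : Matrix (Fin n ⊕ Fin s) (Fin n ⊕ Fin s) R)
                - X * Matrix.fromBlocks A B C D) ^ (k - 1 - i)) * X)).det := by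
  have hQ := dividedDifference_mul_smul_one_sub d m f _ hann
  rw [sub_sub_cancel, ← mul_assoc] at hQ
  simpa only [Fintype.card_fin, dividedDifference] using
    pow_card_mul_det_eq_det_fromBlocks_mul_det_toBlocks₂₂ hQ

/-- Theorem (complementary): with `M̃ = f·I_N - X·M` annihilated by `m(x)`, and `K` the
lower-right `s×s` block of `p(f·I, M̃; m)·X`, we get `m(f)^s · det A = det M · det K`. -/
theorem stmt14 {R : Type*} [CommRing R] {n s : ℕ} (d : ℕ) (m : ℕ → R) (f : R)
    (A : Matrix (Fin n) (Fin n) R) (B : Matrix (Fin n) (Fin s) R)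
    (C : Matrix (Fin s) (Fin n) R) (D : Matrix (Fin s) (Fin s) R)
    (X : Matrix (Fin n ⊕ Fin s) (Fin n ⊕ Fin s) R)
    (hmne : ∃ k, k ≤ d ∧ m k ≠ 0)
    (hann : ∑ k ∈ Finset.range (d + 1),
        m k • (f • (1 : Matrix (Fin n ⊕ Fin s) (Fin n ⊕ Fin s) R)
          - X * Matrix.fromBlocks A B C D) ^ k = 0) :
    (∑ k ∈ Finset.range (d + 1), m k * f ^ k) ^ s * A.det =
      (Matrix.fromBlocks A B C D).det *
        (Matrix.toBlocks₂₂
          ((∑ k ∈ Finset.range (d + 1),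
            m k • ∑ i ∈ Finset.range k,
              f ^ i • (f • (1 : Matrix (Fin n ⊕ Fin s) (Fin n ⊕ Fin s) R)
                - X * Matrix.fromBlocks A B C D) ^ (k - 1 - i)) * X)).det :=
  stmt14_general d m f A B C D X hann
end

section
/- Let M = [[A, B], [C, D]] over a commutative ring R acting on an R-module L, with A·P = P·A = a(f)·I_n where P = Y·p(f, f·I - X·A·Y; a)·X as in the Schur-like setup, and S = a(f)·D - C·P·B. If v₀ ∈ L^n satisfies A·v₀ = 0 and C·v₀ = 0, and w ∈ L^s satisfies S·w = 0, then u = ( -P·B·w + v₀ , a(f)·w ) satisfies M·u = 0. -/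
def matVecSMul {R : Type*} [CommRing R] {L : Type*} [AddCommGroup L] [Module R L]
    {ι κ : Type*} [Fintype κ] (Z : Matrix ι κ R) (y : κ → L) : ι → L :=
  fun i => ∑ j, Z i j • y j

section matVecSMul

variable {R : Type*} [CommRing R] {L : Type*} [AddCommGroup L] [Module R L]
  {ι κ μ : Type*} [Fintype κ]

lemma matVecSMul_add (Z : Matrix ι κ R) (y z : κ → L) :
    matVecSMul Z (y + z) = matVecSMul Z y + matVecSMul Z z := by
  ext i
  simp only [matVecSMul, Pi.add_apply, smul_add, Finset.sum_add_distrib]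

lemma matVecSMul_neg (Z : Matrix ι κ R) (y : κ → L) :
    matVecSMul Z (-y) = -matVecSMul Z y := by
  ext i
  simp only [matVecSMul, Pi.neg_apply, smul_neg, Finset.sum_neg_distrib]

lemma matVecSMul_smul (Z : Matrix ι κ R) (c : R) (y : κ → L) :
    matVecSMul Z (c • y) = c • matVecSMul Z y := by
  ext i
  simp only [matVecSMul, Pi.smul_apply, Finset.smul_sum, smul_comm c]

lemma smul_matVecSMul (c : R) (Z : Matrix ι κ R) (y : κ → L) :
    matVecSMul (c • Z) y = c • matVecSMul Z y := by
  ext i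
  simp only [matVecSMul, Matrix.smul_apply, smul_eq_mul, mul_smul, Pi.smul_apply,
    Finset.smul_sum]

lemma sub_matVecSMul (Z W : Matrix ι κ R) (y : κ → L) :
    matVecSMul (Z - W) y = matVecSMul Z y - matVecSMul W y := by
  ext i
  simp only [matVecSMul, Matrix.sub_apply, sub_smul, Finset.sum_sub_distrib, Pi.sub_apply]

lemma matVecSMul_matVecSMul [Fintype μ] (Z : Matrix ι κ R) (W : Matrix κ μ R) (y : μ → L) :
    matVecSMul Z (matVecSMul W y) = matVecSMul (Z * W) y := by
  ext i
  simp only [matVecSMul, Matrix.mul_apply, Finset.sum_smul, Finset.smul_sum, mul_smul]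
  exact Finset.sum_comm

lemma matVecSMul_fromBlocks {ι' κ' : Type*} [Fintype κ'] (A : Matrix ι κ R)
    (B : Matrix ι κ' R) (C : Matrix ι' κ R) (D : Matrix ι' κ' R) (y : κ → L) (z : κ' → L) :
    matVecSMul (Matrix.fromBlocks A B C D) (Sum.elim y z) =
      Sum.elim (matVecSMul A y + matVecSMul B z) (matVecSMul C y + matVecSMul D z) := by
  ext (i | i) <;> simp [matVecSMul, Fintype.sum_sum_type]

end matVecSMul

theorem stmt15_general {R : Type*} [CommRing R] {L : Type*} [AddCommGroup L] [Module R L]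
    {n s : ℕ} (d : ℕ) (a : ℕ → R) (f : R)
    (A : Matrix (Fin n) (Fin n) R) (B : Matrix (Fin n) (Fin s) R)
    (C : Matrix (Fin s) (Fin n) R) (D : Matrix (Fin s) (Fin s) R)
    (P : Matrix (Fin n) (Fin n) R)
    (hAP : A * P =
      (∑ k ∈ Finset.range (d + 1), a k * f ^ k) • (1 : Matrix (Fin n) (Fin n) R))
    (v₀ : Fin n → L) (w : Fin s → L)
    (hv₀A : matVecSMul A v₀ = 0) (hv₀C : matVecSMul C v₀ = 0)
    (hw : matVecSMul ((∑ k ∈ Finset.range (d + 1), a k * f ^ k) • D - C * P * B) w = 0) :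
    matVecSMul (Matrix.fromBlocks A B C D)
      (Sum.elim (fun i => -(matVecSMul (P * B) w) i + v₀ i)
        (fun j => (∑ k ∈ Finset.range (d + 1), a k * f ^ k) • w j)) = 0 := by
  set α := ∑ k ∈ Finset.range (d + 1), a k * f ^ k
  have hAPB : A * (P * B) = α • B := by
    rw [← Matrix.mul_assoc, hAP, Matrix.smul_mul, Matrix.one_mul]
  have hS : α • matVecSMul D w = matVecSMul (C * (P * B)) w := by
    rw [← sub_eq_zero, ← smul_matVecSMul, ← sub_matVecSMul, ← Matrix.mul_assoc, hw]
  change matVecSMul _ (Sum.elim (-matVecSMul (P * B) w + v₀) (α • w)) = 0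
  rw [matVecSMul_fromBlocks]
  simp only [matVecSMul_add, matVecSMul_neg, matVecSMul_smul, matVecSMul_matVecSMul, hv₀A,
    hv₀C, hAPB, smul_matVecSMul, hS, add_zero, neg_add_cancel, Sum.elim_zero_zero]

/-- Kernel lemma: if `A·P = P·A = a(f)·I` with `P = Y·p(f, f·I − X·A·Y; a)·X`,
`S = a(f)·D − C·P·B`, `A·v₀ = 0`, `C·v₀ = 0` and `S·w = 0`, then
`u = (−P·B·w + v₀, a(f)·w)` lies in the kernel of `M = [[A,B],[C,D]]`. -/
theorem stmt15 {R : Type*} [CommRing R] {L : Type*} [AddCommGroup L] [Module R L]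
    {n s : ℕ} (d : ℕ) (a : ℕ → R) (f : R)
    (A X Y : Matrix (Fin n) (Fin n) R) (B : Matrix (Fin n) (Fin s) R)
    (C : Matrix (Fin s) (Fin n) R) (D : Matrix (Fin s) (Fin s) R)
    (P : Matrix (Fin n) (Fin n) R)
    (hP : P = Y * (∑ k ∈ Finset.range (d + 1),
        a k • ∑ i ∈ Finset.range k,
          f ^ i • (f • (1 : Matrix (Fin n) (Fin n) R) - X * A * Y) ^ (k - 1 - i)) * X)
    (hAP : A * P =
      (∑ k ∈ Finset.range (d + 1), a k * f ^ k) • (1 : Matrix (Fin n) (Fin n) R))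
    (hPA : P * A =
      (∑ k ∈ Finset.range (d + 1), a k * f ^ k) • (1 : Matrix (Fin n) (Fin n) R))
    (v₀ : Fin n → L) (w : Fin s → L)
    (hv₀A : matVecSMul A v₀ = 0) (hv₀C : matVecSMul C v₀ = 0)
    (hw : matVecSMul ((∑ k ∈ Finset.range (d + 1), a k * f ^ k) • D - C * P * B) w = 0) :
    matVecSMul (Matrix.fromBlocks A B C D)
      (Sum.elim (fun i => -(matVecSMul (P * B) w) i + v₀ i)
        (fun j => (∑ k ∈ Finset.range (d + 1), a k * f ^ k) • w j)) = 0 :=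
  stmt15_general d a f A B C D P hAP v₀ w hv₀A hv₀C hw
end

section
/- Let M be a complex (n+s)×(n+s) matrix with principal n×n submatrix A, B, C, D the remaining blocks, and let a(x) be a monic complex polynomial of degree d > 0 with a(A) = 0. Define S(λ) = a(λ)·(λ·I_s - D) - C · p(λ·I, A; a) · B. Then for every λ ∈ ℂ, a(λ)^s · det(λ·I_{n+s} - M) = det(λ·I_n - A) · det(S(λ)). -/
/-!
Put `X = λI - A` and let `P = p(λI, A; a)`, the divided difference of `a`, so that
`P X = a(λ) I - a(A) = a(λ) I`. Multiplying `λI - M = [[X, -B], [-C, λI - D]]` on the left by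
`[[I, 0], [C P, a(λ) I]]` kills the lower left block and leaves `[[X, -B], [0, S(λ)]]`; taking
determinants gives the identity, with no need to invert anything.
-/

open Finset

section DividedDifference

variable {R M : Type*} [CommRing R] [Ring M] [Algebra R M]

theorem geom_sum₂_smul_mul_smul_one_sub (l : R) (A : M) (k : ℕ) :
    (∑ i ∈ range k, l ^ i • A ^ (k - 1 - i)) * (l • 1 - A) = l ^ k • 1 - A ^ k := by
  have hcomm : Commute (algebraMap R M l) A := Algebra.commutes l A
  simpa only [Algebra.smul_def, map_pow, mul_one] using hcomm.geom_sum₂_mul k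

theorem sum_smul_geom_sum₂_mul_smul_one_sub {d : ℕ} {a : ℕ → R} {A : M}
    (hann : ∑ k ∈ range (d + 1), a k • A ^ k = 0) (l : R) :
    (∑ k ∈ range (d + 1), a k • ∑ i ∈ range k, l ^ i • A ^ (k - 1 - i)) * (l • 1 - A) =
      (∑ k ∈ range (d + 1), a k * l ^ k) • 1 := by
  simp_rw [sum_mul (range (d + 1)), smul_mul_assoc, geom_sum₂_smul_mul_smul_one_sub, smul_sub,
    sum_sub_distrib, hann, sub_zero, smul_smul, sum_smul]

end DividedDifference

namespace Matrix

variable {m n R : Type*} [Fintype m] [Fintype n] [DecidableEq m] [DecidableEq n] [CommRing R]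

theorem pow_card_mul_det_fromBlocks_of_mul_eq_smul_one {X P : Matrix m m R} {α : R}
    (hPX : P * X = α • 1) (B : Matrix m n R) (C : Matrix n m R) (Y : Matrix n n R) :
    α ^ Fintype.card n * (fromBlocks X B C Y).det = X.det * (α • Y - C * P * B).det := by
  have hclear : fromBlocks 1 0 (-(C * P)) (α • 1) * fromBlocks X B C Y =
      fromBlocks X B 0 (α • Y - C * P * B) := by
    simp [fromBlocks_multiply, Matrix.mul_assoc, hPX, sub_eq_neg_add]
  have hdet := congrArg det hclear
  rwa [det_mul, det_fromBlocks_zero₁₂, det_fromBlocks_zero₂₁, det_one, one_mul, det_smul,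
    det_one, mul_one] at hdet

end Matrix

theorem stmt16_general {n s : ℕ} (d : ℕ) (a : ℕ → ℂ)
    (A : Matrix (Fin n) (Fin n) ℂ) (B : Matrix (Fin n) (Fin s) ℂ)
    (C : Matrix (Fin s) (Fin n) ℂ) (D : Matrix (Fin s) (Fin s) ℂ)
    (hann : ∑ k ∈ Finset.range (d + 1), a k • A ^ k = 0) :
    ∀ l : ℂ,
      (∑ k ∈ Finset.range (d + 1), a k * l ^ k) ^ s *
          (l • (1 : Matrix (Fin n ⊕ Fin s) (Fin n ⊕ Fin s) ℂ)
            - Matrix.fromBlocks A B C D).det =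
        (l • (1 : Matrix (Fin n) (Fin n) ℂ) - A).det *
          ((∑ k ∈ Finset.range (d + 1), a k * l ^ k) •
              (l • (1 : Matrix (Fin s) (Fin s) ℂ) - D) -
            C * (∑ k ∈ Finset.range (d + 1),
              a k • ∑ i ∈ Finset.range k, l ^ i • A ^ (k - 1 - i)) * B).det := by
  intro l
  have hblocks : l • (1 : Matrix (Fin n ⊕ Fin s) (Fin n ⊕ Fin s) ℂ) - Matrix.fromBlocks A B C D =
      Matrix.fromBlocks (l • 1 - A) (-B) (-C) (l • 1 - D) := by
    rw [← Matrix.fromBlocks_one, Matrix.fromBlocks_smul, sub_eq_add_neg, Matrix.fromBlocks_neg,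
      Matrix.fromBlocks_add]
    simp [sub_eq_add_neg]
  have h := Matrix.pow_card_mul_det_fromBlocks_of_mul_eq_smul_one
    (sum_smul_geom_sum₂_mul_smul_one_sub hann l) (-B) (-C) (l • 1 - D)
  simpa only [Fintype.card_fin, ← hblocks, Matrix.mul_neg, Matrix.neg_mul, neg_neg] using h

/-- For `M = [[A,B],[C,D]]` complex, a monic polynomial `a` of degree `d > 0` annihilating
`A`, and `S(λ) = a(λ)·(λI − D) − C·p(λI, A; a)·B`, we have
`a(λ)^s · det(λI − M) = det(λI − A) · det(S(λ))` for all `λ ∈ ℂ`. -/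
theorem stmt16 {n s : ℕ} (d : ℕ) (hd : 0 < d) (a : ℕ → ℂ) (hmonic : a d = 1)
    (A : Matrix (Fin n) (Fin n) ℂ) (B : Matrix (Fin n) (Fin s) ℂ)
    (C : Matrix (Fin s) (Fin n) ℂ) (D : Matrix (Fin s) (Fin s) ℂ)
    (hann : ∑ k ∈ Finset.range (d + 1), a k • A ^ k = 0) :
    ∀ l : ℂ,
      (∑ k ∈ Finset.range (d + 1), a k * l ^ k) ^ s *
          (l • (1 : Matrix (Fin n ⊕ Fin s) (Fin n ⊕ Fin s) ℂ)
            - Matrix.fromBlocks A B C D).det =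
        (l • (1 : Matrix (Fin n) (Fin n) ℂ) - A).det *
          ((∑ k ∈ Finset.range (d + 1), a k * l ^ k) •
              (l • (1 : Matrix (Fin s) (Fin s) ℂ) - D) -
            C * (∑ k ∈ Finset.range (d + 1),
              a k • ∑ i ∈ Finset.range k, l ^ i • A ^ (k - 1 - i)) * B).det :=
  stmt16_general d a A B C D hann
end

section
/- Let M = [[A,B],[C,D]] ∈ ℂ^{(n+s)×(n+s)} with A annihilated by a monic polynomial a of degree d, and let S(λ) = a(λ)(λI - D) - C·p(λI, A; a)·B. If λ₀ is an eigenvalue of A with algebraic multiplicity m < s, then λ₀ is a root of det(S(λ)) of multiplicity at least s - m. -/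
/-!
Since `a(A) = 0`, the geometric-sum identity gives `(λI - A) · p(λI, A; a) = a(λ) I`.
Multiplying `λI - M` on the right by the block matrix `[[I, p B], [0, a(λ) I]]` makes it block
lower triangular with diagonal blocks `λI - A` and `S(λ)`, so
`det(λI - M) a(λ)^s = det(λI - A) det S(λ)`. As `λ₀` is an eigenvalue of `A`, it is a root of `a`,
hence a root of multiplicity at least `s` of the left-hand side, of which `det(λI - A)` accounts
for only `m`.
-/

open Polynomial Matrix Finset

theorem smul_one_sub_mul_sum_smul_geom_sum₂ {R E : Type*} [CommRing R] [Ring E] [Algebra R E]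
    (a : ℕ → R) (N : ℕ) (r : R) (x : E) :
    (r • (1 : E) - x) * ∑ k ∈ range N, a k • ∑ i ∈ range k, r ^ i • x ^ (k - 1 - i) =
      (∑ k ∈ range N, a k * r ^ k) • (1 : E) - ∑ k ∈ range N, a k • x ^ k := by
  have hcomm : Commute (algebraMap R E r) x := Algebra.commutes r x
  have geom (k : ℕ) : (r • (1 : E) - x) * ∑ i ∈ range k, r ^ i • x ^ (k - 1 - i) =
      r ^ k • (1 : E) - x ^ k := by
    simpa only [Algebra.smul_def, ← map_pow, mul_one] using hcomm.mul_geom_sum₂ k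
  simp only [mul_sum, mul_smul_comm, geom, smul_sub, smul_smul, sum_sub_distrib, sum_smul]

theorem Matrix.det_fromBlocks_mul_pow_of_mul_eq_smul_one {m n R : Type*} [Fintype m] [Fintype n]
    [DecidableEq m] [DecidableEq n] [CommRing R] {L P : Matrix n n R} {α : R} (h : L * P = α • 1)
    (B : Matrix n m R) (C : Matrix m n R) (D : Matrix m m R) :
    det (fromBlocks L (-B) (-C) D) * α ^ Fintype.card m = det L * det (α • D - C * P * B) := by
  have hprod : fromBlocks L (-B) (-C) D * fromBlocks 1 (P * B) 0 (α • 1) =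
      fromBlocks L 0 (-C) (α • D - C * P * B) := by
    rw [fromBlocks_multiply, ← Matrix.mul_assoc, h]
    simp [sub_eq_neg_add, Matrix.mul_assoc]
  simpa [det_fromBlocks_zero₂₁, det_fromBlocks_zero₁₂, det_smul] using congrArg det hprod

theorem Matrix.charmatrix_eq_smul_one_sub {n R : Type*} [Fintype n] [DecidableEq n] [CommRing R]
    (M : Matrix n n R) : charmatrix M = (X : R[X]) • 1 - M.map C := by
  rw [charmatrix, smul_one_eq_diagonal]
  rfl

theorem Matrix.isRoot_of_aeval_eq_zero {n K : Type*} [Fintype n] [DecidableEq n] [Field K]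
    {M : Matrix n n K} {p : K[X]} (hp : aeval M p = 0) {μ : K} (hμ : M.charpoly.IsRoot μ) :
    p.IsRoot μ := by
  have hmem :=
    spectrum.subset_polynomial_aeval M p ⟨μ, mem_spectrum_iff_isRoot_charpoly.2 hμ, rfl⟩
  rw [hp, spectrum.mem_iff, sub_zero] at hmem
  by_contra h
  exact hmem ((Ne.isUnit h).map _)

theorem Polynomial.le_rootMultiplicity_add_of_mul_eq_pow_mul {R : Type*} [CommRing R] [IsDomain R]
    {p f q g : R[X]} {x : R} {s : ℕ} (h : f * p ^ s = q * g) (hp : p.IsRoot x)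
    (hne : f * p ^ s ≠ 0) : s ≤ q.rootMultiplicity x + g.rootMultiplicity x := by
  rw [← rootMultiplicity_mul (h ▸ hne), ← h, rootMultiplicity_mul hne]
  have : s ≤ (p ^ s).rootMultiplicity x :=
    (le_rootMultiplicity_iff (right_ne_zero_of_mul hne)).2
      (pow_dvd_pow_of_dvd (dvd_iff_isRoot.2 hp) s)
  omega

theorem stmt17_general {n s : ℕ} (d : ℕ) (a : ℕ → ℂ) (hmonic : a d = 1)
    (A : Matrix (Fin n) (Fin n) ℂ) (B : Matrix (Fin n) (Fin s) ℂ)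
    (Cm : Matrix (Fin s) (Fin n) ℂ) (D : Matrix (Fin s) (Fin s) ℂ)
    (hann : ∑ k ∈ Finset.range (d + 1), a k • A ^ k = 0)
    (l₀ : ℂ) (m : ℕ)
    (hm : (Matrix.charpoly A).rootMultiplicity l₀ = m)
    (hroot : (Matrix.charpoly A).IsRoot l₀) :
    s - m ≤
      (Matrix.det
        ((∑ k ∈ Finset.range (d + 1), Polynomial.C (a k) * X ^ k) •
            ((X : ℂ[X]) • (1 : Matrix (Fin s) (Fin s) ℂ[X]) - D.map Polynomial.C) -
          (Cm.map Polynomial.C) *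
            (∑ k ∈ Finset.range (d + 1), Polynomial.C (a k) •
              ∑ i ∈ Finset.range k, ((X : ℂ[X]) ^ i) • (A.map Polynomial.C) ^ (k - 1 - i)) *
            (B.map Polynomial.C))).rootMultiplicity l₀ := by
  set aP : ℂ[X] := ∑ k ∈ range (d + 1), C (a k) * X ^ k
  have haP_ne : aP ≠ 0 := fun h ↦ by
    simpa [aP, finsetSum_coeff, coeff_C_mul, coeff_X_pow, hmonic] using congrArg (coeff · d) h
  have haP_root : aP.IsRoot l₀ :=
    isRoot_of_aeval_eq_zero (by simpa [aP, Algebra.smul_def] using hann) hroot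
  have hann_C : ∑ k ∈ range (d + 1), C (a k) • (A.map C) ^ k = 0 := by
    simpa [map_sum, ← Matrix.map_pow, Matrix.map_smul'] using
      congrArg (C : ℂ →+* ℂ[X]).mapMatrix hann
  have hchar_mul := smul_one_sub_mul_sum_smul_geom_sum₂ (fun k ↦ C (a k)) (d + 1) X (A.map C)
  rw [hann_C, sub_zero, ← charmatrix_eq_smul_one_sub] at hchar_mul
  have hdet :=
    det_fromBlocks_mul_pow_of_mul_eq_smul_one hchar_mul (B.map C) (Cm.map C) (charmatrix D)
  rw [← charmatrix_fromBlocks, charmatrix_eq_smul_one_sub D, Fintype.card_fin] at hdet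
  have hle : s ≤ A.charpoly.rootMultiplicity l₀ + _ :=
    le_rootMultiplicity_add_of_mul_eq_pow_mul hdet haP_root
      (mul_ne_zero (charpoly_monic _).ne_zero (pow_ne_zero _ haP_ne))
  rw [hm] at hle
  exact Nat.sub_le_iff_le_add'.2 hle

/-- If `λ₀` is an eigenvalue of `A` of algebraic multiplicity `m < s`, then `λ₀` is a root
of `det(S(λ))` of multiplicity at least `s − m`, where
`S(λ) = a(λ)(λI − D) − C·p(λI, A; a)·B` for a monic annihilating polynomial `a` of `A`. -/
theorem stmt17 {n s : ℕ} (d : ℕ) (hd : 0 < d) (a : ℕ → ℂ) (hmonic : a d = 1)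
    (A : Matrix (Fin n) (Fin n) ℂ) (B : Matrix (Fin n) (Fin s) ℂ)
    (Cm : Matrix (Fin s) (Fin n) ℂ) (D : Matrix (Fin s) (Fin s) ℂ)
    (hann : ∑ k ∈ Finset.range (d + 1), a k • A ^ k = 0)
    (l₀ : ℂ) (m : ℕ)
    (hm : (Matrix.charpoly A).rootMultiplicity l₀ = m) (hms : m < s)
    (hroot : (Matrix.charpoly A).IsRoot l₀) :
    s - m ≤
      (Matrix.det
        ((∑ k ∈ Finset.range (d + 1), Polynomial.C (a k) * X ^ k) •
            ((X : ℂ[X]) • (1 : Matrix (Fin s) (Fin s) ℂ[X]) - D.map Polynomial.C) -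
          (Cm.map Polynomial.C) *
            (∑ k ∈ Finset.range (d + 1), Polynomial.C (a k) •
              ∑ i ∈ Finset.range k, ((X : ℂ[X]) ^ i) • (A.map Polynomial.C) ^ (k - 1 - i)) *
            (B.map Polynomial.C))).rootMultiplicity l₀ :=
  stmt17_general d a hmonic A B Cm D hann l₀ m hm hroot
end

section
/- Let A ∈ ℂ^{n×n} satisfy A² + (μ-α)A - (t-μ)I = μJ and AJ = JA = kJ (J the all-ones matrix), and for each vertex i let R_i be the (n-1)×(n-1) principal submatrix of A obtained by deleting row and column i. If the diagonal of A is zero and each row of A sums to k (so U = 0 and T₀S₀ = k in the partition for each i), then the characteristic polynomial of R_i is the same for all i; i.e., all vertex-deleted subgraphs of an undirected strongly regular graph are cospectral. -/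
/-!
Deleting vertex `i` leaves a principal submatrix whose characteristic polynomial is the
diagonal entry `adj(X - A)ᵢᵢ`. Away from the finitely many roots of
`(x - k)(x² + (μ - α)x - (t - μ))` the identities `A² = μJ + (t - μ)I - (μ - α)A` and
`AJ = kJ` make the resolvent `(x - A)⁻¹` an explicit combination `aI + bA + cJ`, so
`adj(x - A) = det(x - A) • (aI + bA + cJ)` has constant diagonal because `A` has zero diagonal.
Two polynomials agreeing at all but finitely many points coincide.
-/

open Polynomial

namespace Matrix

section CommRing

variable {R : Type*} [CommRing R]

theorem charmatrix_submatrix {m n : Type*} [Fintype m] [DecidableEq m] [Fintype n]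
    [DecidableEq n] (A : Matrix n n R) {f : m → n} (hf : Function.Injective f) :
    A.charmatrix.submatrix f f = (A.submatrix f f).charmatrix := by
  ext a b
  obtain rfl | hab := eq_or_ne a b
  · simp
  · rw [submatrix_apply, charmatrix_apply_ne _ _ _ (hf.ne hab), charmatrix_apply_ne _ _ _ hab,
      submatrix_apply]

theorem charpoly_submatrix_succAbove {n : ℕ} (A : Matrix (Fin (n + 1)) (Fin (n + 1)) R)
    (i : Fin (n + 1)) :
    (A.submatrix i.succAbove i.succAbove).charpoly = A.charmatrix.adjugate i i := by
  rw [adjugate_fin_succ_eq_det_submatrix, charmatrix_submatrix _ Fin.succAbove_right_injective,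
    charpoly, ← two_mul, pow_mul, neg_one_sq, one_pow, one_mul]

variable {n : Type*} [Fintype n] [DecidableEq n]

theorem eval_adjugate_charmatrix (A : Matrix n n R) (x : R) (i j : n) :
    (A.charmatrix.adjugate i j).eval x = (scalar n x - A).adjugate i j := by
  have hmap : A.charmatrix.map (eval x) = scalar n x - A := by
    ext a b
    obtain rfl | hab := eq_or_ne a b <;> simp [*]
  rw [← hmap, ← coe_evalRingHom, ← RingHom.mapMatrix_apply, ← RingHom.map_adjugate]
  rfl

theorem adjugate_eq_det_smul_of_mul_eq_one {M Y : Matrix n n R} (h : M * Y = 1) :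
    M.adjugate = M.det • Y :=
  calc M.adjugate = M.adjugate * (M * Y) := by rw [h, Matrix.mul_one]
    _ = M.det • Y := by rw [← Matrix.mul_assoc, adjugate_mul, smul_mul, Matrix.one_mul]

end CommRing

theorem scalar_sub_mul_eq_one_of_sq_eq {K : Type*} [Field K] {n : Type*} [Fintype n]
    [DecidableEq n] {A J : Matrix n n K} {k μ α t x : K}
    (hA : A ^ 2 + (μ - α) • A - (t - μ) • 1 = μ • J) (hAJ : A * J = k • J)
    (hq : x ^ 2 + (μ - α) * x - (t - μ) ≠ 0) (hk : x ≠ k) :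
    (scalar n x - A) * (((x + μ - α) / (x ^ 2 + (μ - α) * x - (t - μ))) • 1
      + (x ^ 2 + (μ - α) * x - (t - μ))⁻¹ • A
      + (μ / ((x ^ 2 + (μ - α) * x - (t - μ)) * (x - k))) • J) = 1 := by
  have hAA : A * A = μ • J + (t - μ) • 1 - (μ - α) • A := by
    rw [← sq, ← hA]; abel
  have hk' : x - k ≠ 0 := sub_ne_zero.mpr hk
  set q := x ^ 2 + (μ - α) * x - (t - μ) with hq_def
  simp only [scalar_apply, ← smul_one_eq_diagonal, sub_mul, mul_add, Matrix.smul_mul,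
    Matrix.mul_smul, Matrix.one_mul, Matrix.mul_one, hAA, hAJ]
  match_scalars <;> field_simp <;> rw [hq_def] <;> ring

end Matrix

theorem Polynomial.eq_of_eval_eq_of_eval_ne_zero {R : Type*} [CommRing R] [IsDomain R]
    [Infinite R] {p f g : R[X]} (hp : p ≠ 0) (h : ∀ x, p.eval x ≠ 0 → f.eval x = g.eval x) :
    f = g := by
  refine mul_left_cancel₀ hp (Polynomial.funext fun x => ?_)
  by_cases hx : p.eval x = 0
  · simp [hx]
  · simp [h x hx]

theorem stmt19_general {n : ℕ} (A : Matrix (Fin (n + 1)) (Fin (n + 1)) ℂ) (k μ α t : ℂ)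
    (J : Matrix (Fin (n + 1)) (Fin (n + 1)) ℂ) (hJ : J = Matrix.of fun _ _ => (1 : ℂ))
    (hdiag : ∀ i, A i i = 0)
    (h1 : A ^ 2 + (μ - α) • A - (t - μ) • (1 : Matrix (Fin (n + 1)) (Fin (n + 1)) ℂ) = μ • J)
    (h2 : A * J = k • J) :
    ∀ i j : Fin (n + 1),
      (A.submatrix i.succAbove i.succAbove).charpoly =
        (A.submatrix j.succAbove j.succAbove).charpoly := by
  intro i j
  rw [Matrix.charpoly_submatrix_succAbove, Matrix.charpoly_submatrix_succAbove]
  have hp : (X - C k) * (X ^ 2 + C (μ - α) * X - C (t - μ)) ≠ 0 := by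
    refine mul_ne_zero (X_sub_C_ne_zero k) (Monic.ne_zero ?_)
    monicity!
  refine eq_of_eval_eq_of_eval_ne_zero hp fun x hx => ?_
  obtain ⟨hk, hq⟩ : x - k ≠ 0 ∧ x ^ 2 + (μ - α) * x - (t - μ) ≠ 0 := by
    simpa using hx
  simp only [Matrix.eval_adjugate_charmatrix, Matrix.adjugate_eq_det_smul_of_mul_eq_one
    (Matrix.scalar_sub_mul_eq_one_of_sq_eq h1 h2 hq (sub_ne_zero.mp hk))]
  simp [hJ, hdiag]

/-- All vertex-deleted subgraphs of an undirected strongly regular graph are cospectral: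
if `A` is a symmetric 0-1 matrix with zero diagonal satisfying
`A² + (μ−α)A − (t−μ)I = μJ` and `AJ = JA = kJ`, with each row summing to `k`, then the
characteristic polynomials of all principal submatrices obtained by deleting one row and
the corresponding column coincide. -/
theorem stmt19 {n : ℕ} (A : Matrix (Fin (n + 1)) (Fin (n + 1)) ℂ) (k μ α t : ℂ)
    (J : Matrix (Fin (n + 1)) (Fin (n + 1)) ℂ) (hJ : J = Matrix.of fun _ _ => (1 : ℂ))
    (hsym : A.transpose = A)
    (h01 : ∀ i j, A i j = 0 ∨ A i j = 1)
    (hdiag : ∀ i, A i i = 0)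
    (hrow : ∀ i, ∑ j, A i j = k)
    (h1 : A ^ 2 + (μ - α) • A - (t - μ) • (1 : Matrix (Fin (n + 1)) (Fin (n + 1)) ℂ) = μ • J)
    (h2 : A * J = k • J) (h3 : J * A = k • J) :
    ∀ i j : Fin (n + 1),
      (A.submatrix i.succAbove i.succAbove).charpoly =
        (A.submatrix j.succAbove j.succAbove).charpoly :=
  stmt19_general A k μ α t J hJ hdiag h1 h2
end
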